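/- For all integers s1, s2 ≥ 1 and every integer n ≥ 2, the following identity holds: 2·b^{(s1)}_{n+1} + s2·b^{(s1)}_n = 2^{s1−1}·( (4·s1 + 4·s2 + s1·s2 + 16)·F_{n+2} − (2·s1 + 2·s2 + 16)·F_n + 4·F_{n−2} ). -/
import Mathlib


/-- Shifted sequence `bSeq s1 n = b^{(s1)}_{n-2}`. -/
def bSeq (s1 : ℕ) : ℕ → ℤ
  | 0 => 2 ^ s1
  | 1 => if s1 = 0 then 1 else 2 ^ (s1 - 1) * (s1 + 2)
  | n + 2 => bSeq s1 (n + 1) + bSeq s1 n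

lemma two_pow_succ' (s1 : ℕ) (hs1 : 1 ≤ s1) : (2 : ℤ) ^ s1 = 2 * 2 ^ (s1 - 1) := by
  obtain ⟨t, rfl⟩ := Nat.exists_eq_add_of_le hs1
  simp [pow_succ, Nat.add_sub_cancel_left, pow_add, mul_comm]

lemma bSeq_closed (s1 : ℕ) (hs1 : 1 ≤ s1) :
    ∀ k, bSeq s1 (k + 1) =
      2 ^ (s1 - 1) * (((s1 : ℤ) + 2) * Nat.fib (k + 1) + 2 * Nat.fib k) := by
  intro k
  induction k using Nat.twoStepInduction with
  | zero =>
      simp [bSeq, Nat.one_le_iff_ne_zero.mp hs1]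
  | one =>
      have h2 : bSeq s1 2 = bSeq s1 1 + bSeq s1 0 := rfl
      rw [h2]
      simp [bSeq, Nat.one_le_iff_ne_zero.mp hs1, two_pow_succ' s1 hs1]
      ring
  | more k ih1 ih2 =>
      have h : bSeq s1 (k + 2 + 1) = bSeq s1 (k + 1 + 1) + bSeq s1 (k + 1) := rfl
      rw [h, ih1, ih2, Nat.fib_add_two (n := k + 1), Nat.fib_add_two (n := k)]
      push_cast
      ring

/-- For all integers `s1, s2 ≥ 1` and every `n ≥ 2`:
`2 b^{(s1)}_{n+1} + s2 b^{(s1)}_n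
  = 2^{s1-1} ((4s1+4s2+s1·s2+16) F_{n+2} - (2s1+2s2+16) F_n + 4 F_{n-2})`. -/
theorem bSeq_fib_identity_general (s1 s2 n : ℕ)
    (hs1 : 1 ≤ s1) (hs2 : 1 ≤ s2) (hn : 2 ≤ n) :
    2 * bSeq s1 (n + 3) + (s2 : ℤ) * bSeq s1 (n + 2) =
      2 ^ (s1 - 1) *
        ((4 * (s1 : ℤ) + 4 * s2 + (s1 : ℤ) * s2 + 16) * Nat.fib (n + 2)
          - (2 * (s1 : ℤ) + 2 * s2 + 16) * Nat.fib n
          + 4 * Nat.fib (n - 2)) := by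
  obtain ⟨m, rfl⟩ := Nat.exists_eq_add_of_le hn
  have h2 : 2 + m - 2 = m := by omega
  rw [h2]
  have e3 : 2 + m + 3 = (m + 4) + 1 := by ring
  have e2 : 2 + m + 2 = (m + 3) + 1 := by ring
  rw [e3, e2, bSeq_closed s1 hs1, bSeq_closed s1 hs1]
  rw [show (2 + m) = m + 2 from by ring]
  simp only [show m + 4 + 1 = m + 3 + 2 from rfl, show m + 3 + 1 = m + 2 + 2 from rfl,
    show m + 4 = m + 2 + 2 from rfl, show m + 3 = m + 1 + 2 from rfl, Nat.fib_add_two]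
  push_cast
  ring
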